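/- Theorem 1 for n = 4 (local form): if α₁,…,α₄ ∈ ℂ with α₁α₂α₃α₄ = 1, then as formal power series in Y, (1 - Y²)⁻¹ · Σ_{k ≥ 0} s_{(k,k,0,0)}(α₁,…,α₄) Y^{k} = ∏_{1≤i<j≤4}(1 - αᵢαⱼ Y)⁻¹, i.e. the local exterior square factor equals (1-Y²)⁻¹ times the generating function of the 'middle' Schur values s_{(k,k,0,0)}. -/

import Mathlib

/-!
By Jacobi–Trudi, the last two rows `(0, 0, 1, h₁)` and `(0, 0, 0, 1)` reduce `s_{(k,k,0,0)}` to the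
`2 × 2` minor `h_k² - h_{k+1} h_{k-1}` of the sequence `h` of complete homogeneous values. Since
`∑ h_k Y^k = ∏ᵢ (1 - αᵢ Y)⁻¹`, the sequence `h` (extended by zero) satisfies the order-4 linear
recurrence with characteristic polynomial `∏ᵢ (1 - αᵢ Y) = 1 - e₁Y + e₂Y² - e₃Y³ + e₄Y⁴` at every
index except `0`.
A polynomial identity shows that the minors of any such sequence satisfy the recurrence of the
exterior square `∏_{i<j} (1 - αᵢαⱼ Y)`, so multiplying their generating function by it leaves only
the low-degree terms coming from `h₀, …, h₄`, namely `1 - e₄ Y²`.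
-/

/-- The complete homogeneous symmetric function `h_m` evaluated at `α 0, …, α (n-1)`. -/
noncomputable def hVal {R : Type*} [CommRing R] (n : ℕ) (α : Fin n → R) (m : ℕ) : R :=
  ∑ d ∈ Finset.Nat.antidiagonalTuple n m, ∏ i, α i ^ d i

/-- `h_m` extended by zero to negative integer indices. -/
noncomputable def hValZ {R : Type*} [CommRing R] (n : ℕ) (α : Fin n → R) (m : ℤ) : R :=
  if 0 ≤ m then hVal n α m.toNat else 0

/-- The Schur polynomial `s_λ` evaluated at `α`, defined by the Jacobi–Trudi
determinant `det (h_{λ_i - i + j})`. -/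
noncomputable def schurVal {R : Type*} [CommRing R] (n : ℕ) (α : Fin n → R)
    (lam : Fin n → ℕ) : R :=
  (Matrix.of fun i j : Fin n => hValZ n α ((lam i : ℤ) - (i : ℤ) + (j : ℤ))).det

open PowerSeries

variable {R : Type*} [CommRing R]

theorem hVal_zero (n : ℕ) (α : Fin n → R) : hVal n α 0 = 1 := by
  simp [hVal, Finset.Nat.antidiagonalTuple_zero_right]

theorem hValZ_zero (n : ℕ) (α : Fin n → R) : hValZ n α 0 = 1 := by
  simp [hValZ, hVal_zero]

theorem hValZ_natCast (n : ℕ) (α : Fin n → R) (k : ℕ) : hValZ n α k = hVal n α k := by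
  simp [hValZ]

theorem hValZ_of_neg {n : ℕ} (α : Fin n → R) {m : ℤ} (hm : m < 0) : hValZ n α m = 0 :=
  if_neg hm.not_ge

theorem mk_hVal_eq_prod (n : ℕ) (α : Fin n → R) :
    mk (hVal n α) = ∏ i, mk fun m => α i ^ m := by
  classical
  ext m
  rw [coeff_mk, coeff_prod, hVal]
  exact (Finset.sum_equiv Finsupp.equivFunOnFinite
    (by simp [Finset.mem_finsuppAntidiag, Finset.Nat.mem_antidiagonalTuple]) (by simp)).symm

theorem mk_pow_mul_one_sub_C_mul_X (a : R) : (mk fun m => a ^ m) * (1 - C a * X) = 1 := by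
  simpa [rescale_mk, rescale_X] using congr(rescale a $(mk_one_mul_one_sub_eq_one (S := R)))

theorem mk_hVal_mul_prod (n : ℕ) (α : Fin n → R) :
    mk (hVal n α) * ∏ i, (1 - C (α i) * X) = 1 := by
  rw [mk_hVal_eq_prod, ← Finset.prod_mul_distrib]
  simp [mk_pow_mul_one_sub_C_mul_X]

def toeplitzMinor (g : ℤ → R) (k : ℤ) : R := g k ^ 2 - g (k + 1) * g (k - 1)

/- The six coefficients are those of `∏_{i<j} (1 - αᵢαⱼ Y)` in terms of the elementary symmetric
functions `eᵢ` of `α₁, …, α₄`, i.e. of the exterior square of the recurrence. -/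
theorem toeplitzMinor_recurrence {e₁ e₂ e₃ e₄ : R} {g : ℤ → R} {m : ℤ}
    (hg : ∀ k, m - 3 ≤ k → k ≤ m + 1 →
      g k = e₁ * g (k - 1) - e₂ * g (k - 2) + e₃ * g (k - 3) - e₄ * g (k - 4)) :
    toeplitzMinor g m - e₂ * toeplitzMinor g (m - 1) + (e₁ * e₃ - e₄) * toeplitzMinor g (m - 2)
      - (e₃ ^ 2 - 2 * e₂ * e₄ + e₁ ^ 2 * e₄) * toeplitzMinor g (m - 3)
      + (e₁ * e₃ * e₄ - e₄ ^ 2) * toeplitzMinor g (m - 4) - e₂ * e₄ ^ 2 * toeplitzMinor g (m - 5)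
      + e₄ ^ 3 * toeplitzMinor g (m - 6) = 0 := by
  have r₀ := hg (m + 1) (by omega) le_rfl
  have r₁ := hg m (by omega) (by omega)
  have r₂ := hg (m - 1) (by omega) (by omega)
  have r₃ := hg (m - 2) (by omega) (by omega)
  have r₄ := hg (m - 3) le_rfl (by omega)
  simp only [toeplitzMinor]
  ring_nf at r₀ r₁ r₂ r₃ r₄ ⊢
  -- eliminating `g (m + 1), …, g (m - 3)` from the top down leaves a polynomial identity
  -- in `g (m - 4), …, g (m - 7)`
  rw [r₀, r₁, r₂, r₃, r₄]
  ring

section ZeroOnNegatives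

variable {g : ℤ → R}

theorem coeff_mk_mul_C_mul_X_pow (hg : ∀ m < 0, g m = 0) (c : R) (d n : ℕ) :
    coeff n (mk (fun k : ℕ => g k) * (C c * X ^ d)) = c * g (n - d) := by
  rw [mul_left_comm, coeff_C_mul, coeff_mul_X_pow']
  split_ifs with h
  · rw [coeff_mk, Nat.cast_sub h]
  · rw [hg _ (by omega), mul_zero]

theorem coeff_mk_mul_C_mul_X (hg : ∀ m < 0, g m = 0) (c : R) (n : ℕ) :
    coeff n (mk (fun k : ℕ => g k) * (C c * X)) = c * g (n - 1) := by
  simpa using coeff_mk_mul_C_mul_X_pow hg c 1 n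

theorem recurrence_of_mk_mul_eq_one (hg : ∀ m < 0, g m = 0) {e₁ e₂ e₃ e₄ : R}
    (he : mk (fun k : ℕ => g k) * (1 - C e₁ * X + C e₂ * X ^ 2 - C e₃ * X ^ 3 + C e₄ * X ^ 4) = 1)
    (m : ℤ) :
    g m - e₁ * g (m - 1) + e₂ * g (m - 2) - e₃ * g (m - 3) + e₄ * g (m - 4) =
      if m = 0 then 1 else 0 := by
  rcases lt_or_ge m 0 with hm | hm
  · simp [hm.ne, hg m hm, hg (m - 1) (by omega), hg (m - 2) (by omega), hg (m - 3) (by omega),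
      hg (m - 4) (by omega)]
  · lift m to ℕ using hm
    have hcoeff := congr(coeff m $he)
    simp only [mul_add, mul_sub, mul_one, map_add (coeff m), map_sub (coeff m), coeff_mk,
      coeff_mk_mul_C_mul_X_pow hg, coeff_mk_mul_C_mul_X hg, coeff_one] at hcoeff
    simpa using hcoeff

theorem mk_toeplitzMinor_mul (hg : ∀ m < 0, g m = 0) {e₁ e₂ e₃ e₄ : R}
    (he : mk (fun k : ℕ => g k) * (1 - C e₁ * X + C e₂ * X ^ 2 - C e₃ * X ^ 3 + C e₄ * X ^ 4) = 1) :
    mk (fun k : ℕ => toeplitzMinor g k) *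
        (1 - C e₂ * X + C (e₁ * e₃ - e₄) * X ^ 2 - C (e₃ ^ 2 - 2 * e₂ * e₄ + e₁ ^ 2 * e₄) * X ^ 3
          + C (e₁ * e₃ * e₄ - e₄ ^ 2) * X ^ 4 - C (e₂ * e₄ ^ 2) * X ^ 5 + C (e₄ ^ 3) * X ^ 6) =
      1 - C e₄ * X ^ 2 := by
  have hrec (m : ℤ) (hm : m ≠ 0) :
      g m = e₁ * g (m - 1) - e₂ * g (m - 2) + e₃ * g (m - 3) - e₄ * g (m - 4) := by
    linear_combination (recurrence_of_mk_mul_eq_one hg he m).trans (if_neg hm)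
  have hminor : ∀ m < 0, toeplitzMinor g m = 0 := fun m hm => by
    simp [toeplitzMinor, hg m hm, hg (m - 1) (by omega)]
  ext n
  simp only [mul_add, mul_sub, mul_one, map_add (coeff n), map_sub (coeff n), coeff_mk, coeff_one,
    coeff_C_mul, coeff_X_pow, coeff_mk_mul_C_mul_X_pow hminor, coeff_mk_mul_C_mul_X hminor]
  rcases lt_or_ge n 4 with hn | hn
  · have hg₀ : g 0 = 1 := by simpa [hg] using recurrence_of_mk_mul_eq_one hg he 0
    have hpos (m : ℤ) (hm : 0 < m) := hrec m hm.ne'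
    interval_cases n <;> simp [toeplitzMinor, hg, hg₀, hpos] <;> ring
  · rw [if_neg (by omega), if_neg (by omega)]
    simpa using toeplitzMinor_recurrence (m := n) fun k hk _ => hrec k (by omega)

end ZeroOnNegatives

theorem schurVal_kk00_eq_toeplitzMinor (α : Fin 4 → R) (k : ℕ) :
    schurVal 4 α ![k, k, 0, 0] = toeplitzMinor (hValZ 4 α) k := by
  rw [toeplitzMinor]
  simp [schurVal, Matrix.det_succ_row_zero, Fin.sum_univ_succ, Fin.succAbove, hValZ_of_neg,
    hValZ_zero]
  ring

theorem mk_schurVal_kk00_mul_prod (α : Fin 4 → R) :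
    (mk fun k => schurVal 4 α ![k, k, 0, 0]) *
        ∏ p ∈ Finset.univ.filter (fun p : Fin 4 × Fin 4 => p.1 < p.2),
          (1 - C (α p.1 * α p.2) * X) =
      1 - C (∏ i, α i) * X ^ 2 := by
  set e₁ := α 0 + α 1 + α 2 + α 3 with he₁
  set e₂ := α 0 * α 1 + α 0 * α 2 + α 0 * α 3 + α 1 * α 2 + α 1 * α 3 + α 2 * α 3 with he₂
  set e₃ := α 0 * α 1 * α 2 + α 0 * α 1 * α 3 + α 0 * α 2 * α 3 + α 1 * α 2 * α 3 with he₃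
  set e₄ := α 0 * α 1 * α 2 * α 3 with he₄
  have hchar : ∏ i, (1 - C (α i) * X) =
      1 - C e₁ * X + C e₂ * X ^ 2 - C e₃ * X ^ 3 + C e₄ * X ^ 4 := by
    simp only [Fin.prod_univ_four, he₁, he₂, he₃, he₄, map_add, map_mul]
    ring
  have hpairs : ∏ p ∈ Finset.univ.filter (fun p : Fin 4 × Fin 4 => p.1 < p.2),
      (1 - C (α p.1 * α p.2) * X) =
      1 - C e₂ * X + C (e₁ * e₃ - e₄) * X ^ 2 - C (e₃ ^ 2 - 2 * e₂ * e₄ + e₁ ^ 2 * e₄) * X ^ 3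
        + C (e₁ * e₃ * e₄ - e₄ ^ 2) * X ^ 4 - C (e₂ * e₄ ^ 2) * X ^ 5 + C (e₄ ^ 3) * X ^ 6 := by
    rw [show Finset.univ.filter (fun p : Fin 4 × Fin 4 => p.1 < p.2) =
      {(0, 1), (0, 2), (0, 3), (1, 2), (1, 3), (2, 3)} by decide]
    simp [he₁, he₂, he₃, he₄, map_ofNat]
    ring
  have hh : mk (fun k : ℕ => hValZ 4 α k) *
      (1 - C e₁ * X + C e₂ * X ^ 2 - C e₃ * X ^ 3 + C e₄ * X ^ 4) = 1 := by
    simpa [hValZ_natCast, hchar] using mk_hVal_mul_prod 4 α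
  rw [hpairs, Fin.prod_univ_four, ← he₄,
    ← mk_toeplitzMinor_mul (fun m hm => hValZ_of_neg α hm) hh]
  simp only [schurVal_kk00_eq_toeplitzMinor]

/-- Theorem 1 for `n = 4` at a single prime: if `α₁α₂α₃α₄ = 1` then
`(1 - Y²)⁻¹ Σ_{k≥0} s_{(k,k,0,0)}(α) Y^k = ∏_{1≤i<j≤4} (1 - αᵢαⱼ Y)⁻¹`
in `ℂ[[Y]]`, stated with denominators cleared. -/
theorem local_theorem_one_gl4 (α : Fin 4 → ℂ) (h : ∏ i, α i = 1) :
    (PowerSeries.mk fun k => schurVal 4 α ![k, k, 0, 0]) *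
        ∏ p ∈ Finset.univ.filter (fun p : Fin 4 × Fin 4 => p.1 < p.2),
          (1 - PowerSeries.C (α p.1 * α p.2) * PowerSeries.X) =
      1 - (PowerSeries.X : PowerSeries ℂ) ^ 2 := by
  rw [mk_schurVal_kk00_mul_prod, h, map_one, one_mul]
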